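/- arXiv:2302.09193 — 3 statements merged into one kernel-verified Lean document; each statement's English description precedes it below -/
import Mathlib

section
/- Sklar's theorem (converse direction): if C : [0,1]^d → [0,1] is a copula and F₁,…,F_d are univariate cumulative distribution functions, then H(x₁,…,x_d) := C(F₁(x₁),…,F_d(x_d)) is a d-dimensional cumulative distribution function with margins F₁,…,F_d. -/
open MeasureTheory Set Filter Topology

/-- A univariate cumulative distribution function. -/
def IsCDF (F : ℝ → ℝ) : Prop :=
  Monotone F ∧ (∀ x, ContinuousWithinAt F (Ici x) x) ∧
    Tendsto F atBot (nhds 0) ∧ Tendsto F atTop (nhds 1)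

/-- A `d`-dimensional copula: on `[0,1]^d` it is the joint CDF of a random
vector with uniform `[0,1]` margins. -/
def IsCopula (d : ℕ) (C : (Fin d → ℝ) → ℝ) : Prop :=
  ∃ μ : Measure (Fin d → ℝ), IsProbabilityMeasure μ ∧
    (∀ i, μ.map (fun y => y i) = volume.restrict (Icc (0 : ℝ) 1)) ∧
    ∀ u : Fin d → ℝ, (∀ i, u i ∈ Icc (0 : ℝ) 1) →
      C u = (μ {y | ∀ i, y i ≤ u i}).toReal

/-- Generalized inverse (quantile) of a CDF, set to `0` off `(0,1)`. -/
noncomputable def sklarQuantile (F : ℝ → ℝ) (u : ℝ) : ℝ :=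
  if u ∈ Ioo (0 : ℝ) 1 then sInf {x | u ≤ F x} else 0

lemma sklar_cdf_mem {F : ℝ → ℝ} (hF : IsCDF F) (t : ℝ) : F t ∈ Icc (0 : ℝ) 1 := by
  obtain ⟨hmono, _, hbot, htop⟩ := hF
  constructor
  · exact le_of_tendsto hbot (by filter_upwards [eventually_le_atBot t] with s hs using hmono hs)
  · exact ge_of_tendsto htop (by filter_upwards [eventually_ge_atTop t] with s hs using hmono hs)

lemma sklar_quantile_le_iff {F : ℝ → ℝ} (hF : IsCDF F) {u : ℝ} (hu : u ∈ Ioo (0 : ℝ) 1)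
    (t : ℝ) : sklarQuantile F u ≤ t ↔ u ≤ F t := by
  obtain ⟨hmono, hrc, hbot, htop⟩ := hF
  have hne : {x | u ≤ F x}.Nonempty := by
    obtain ⟨x, hx⟩ := (htop.eventually (eventually_ge_nhds hu.2)).exists
    exact ⟨x, hx⟩
  have hbdd : BddBelow {x | u ≤ F x} := by
    obtain ⟨x₀, hx₀⟩ := (hbot.eventually (eventually_lt_nhds hu.1)).exists
    refine ⟨x₀, fun z hz => ?_⟩
    by_contra h
    push_neg at h
    exact absurd (hz.trans (hmono h.le)) (not_le.2 hx₀)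
  rw [sklarQuantile, if_pos hu]
  constructor
  · intro h
    have hmem : sInf {x | u ≤ F x} ∈ closure {x | u ≤ F x} := csInf_mem_closure hne hbdd
    have hneBot : (𝓝[{x | u ≤ F x}] (sInf {x | u ≤ F x})).NeBot :=
      mem_closure_iff_nhdsWithin_neBot.1 hmem
    have hct : Tendsto F (𝓝[{x | u ≤ F x}] (sInf {x | u ≤ F x}))
        (𝓝 (F (sInf {x | u ≤ F x}))) :=
      (hrc _).mono_left (nhdsWithin_mono _ (fun z hz => csInf_le hbdd hz))
    have hu' : u ≤ F (sInf {x | u ≤ F x}) :=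
      ge_of_tendsto hct (eventually_nhdsWithin_of_forall fun z hz => hz)
    exact hu'.trans (hmono h)
  · intro h
    exact csInf_le hbdd h

lemma sklar_quantile_measurable {F : ℝ → ℝ} (hF : IsCDF F) :
    Measurable (sklarQuantile F) := by
  apply measurable_of_Iic
  intro t
  have : sklarQuantile F ⁻¹' Iic t =
      (Ioo (0 : ℝ) 1 ∩ Iic (F t)) ∪ ((Ioo (0 : ℝ) 1)ᶜ ∩ (if (0 : ℝ) ≤ t then univ else ∅)) := by
    ext u
    by_cases hu : u ∈ Ioo (0 : ℝ) 1
    · simp [mem_preimage, mem_Iic, sklar_quantile_le_iff hF hu t, hu]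
    · simp only [mem_preimage, mem_Iic, sklarQuantile, if_neg hu]
      split_ifs with h
      · simp [hu, h]
      · simp [hu, h]
  rw [this]
  split_ifs with h <;>
    exact (measurableSet_Ioo.inter measurableSet_Iic).union
      (measurableSet_Ioo.compl.inter (by measurability))

/-- Sklar's theorem (converse direction): if `C` is a copula and `F₁, …, F_d`
are univariate CDFs, then `H x = C (F₁ x₁, …, F_d x_d)` is a `d`-dimensional
CDF with margins `F₁, …, F_d`. -/
theorem sklar_converse
    (d : ℕ) (C : (Fin d → ℝ) → ℝ) (hC : IsCopula d C)
    (F : Fin d → ℝ → ℝ) (hF : ∀ i, IsCDF (F i))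
    (H : (Fin d → ℝ) → ℝ) (hH : ∀ x, H x = C fun i => F i (x i)) :
    ∃ ν : Measure (Fin d → ℝ), IsProbabilityMeasure ν ∧
      (∀ x, H x = (ν {y | ∀ i, y i ≤ x i}).toReal) ∧
      ∀ i t, ((ν.map fun y => y i) (Iic t)).toReal = F i t := by
  obtain ⟨μ, hμ, hmarg, hCeq⟩ := hC
  set f : (Fin d → ℝ) → (Fin d → ℝ) := fun y i => sklarQuantile (F i) (y i) with hf
  have hfm : Measurable f :=
    measurable_pi_lambda _ fun i =>
      (sklar_quantile_measurable (hF i)).comp (measurable_pi_apply i)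
  -- almost every point of μ has all coordinates in (0,1)
  have hA : ∀ᵐ y ∂μ, ∀ i, y i ∈ Ioo (0 : ℝ) 1 := by
    rw [ae_all_iff]
    intro i
    rw [ae_iff]
    have h1 : {y : Fin d → ℝ | ¬ y i ∈ Ioo (0 : ℝ) 1} =
        (fun y : Fin d → ℝ => y i) ⁻¹' (Ioo (0 : ℝ) 1)ᶜ := rfl
    rw [h1, ← Measure.map_apply (measurable_pi_apply i) measurableSet_Ioo.compl, hmarg i,
      Measure.restrict_apply measurableSet_Ioo.compl]
    have h2 : (Ioo (0 : ℝ) 1)ᶜ ∩ Icc (0 : ℝ) 1 ⊆ {0, 1} := by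
      rintro x ⟨hx1, hx2⟩
      simp only [mem_compl_iff, mem_Ioo, not_and_or, not_lt] at hx1
      rcases hx1 with h | h
      · exact Or.inl (le_antisymm h hx2.1)
      · exact Or.inr (le_antisymm hx2.2 h)
    refine measure_mono_null h2 ?_
    exact ((Set.finite_singleton (1:ℝ)).insert 0).measure_zero volume
  -- key computation
  have hmeasle : ∀ x : Fin d → ℝ, MeasurableSet {y : Fin d → ℝ | ∀ i, y i ≤ x i} := by
    intro x
    have : {y : Fin d → ℝ | ∀ i, y i ≤ x i} = ⋂ i, {y | y i ≤ x i} := by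
      ext y; simp
    rw [this]
    exact MeasurableSet.iInter fun i =>
      measurableSet_le (measurable_pi_apply i) measurable_const
  have key : ∀ x : Fin d → ℝ,
      (μ.map f) {y | ∀ i, y i ≤ x i} = μ {y | ∀ i, y i ≤ F i (x i)} := by
    intro x
    rw [Measure.map_apply hfm (hmeasle x)]
    apply measure_congr
    rw [Filter.eventuallyEq_set]
    filter_upwards [hA] with y hy
    simp only [mem_preimage, mem_setOf_eq, hf]
    exact forall_congr' fun i => sklar_quantile_le_iff (hF i) (hy i) (x i)
  refine ⟨μ.map f, Measure.isProbabilityMeasure_map hfm.aemeasurable, ?_, ?_⟩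
  · intro x
    rw [hH x, hCeq _ (fun i => sklar_cdf_mem (hF i) (x i)), key x]
  · intro i t
    have hcomp : (μ.map f).map (fun y => y i) = μ.map (fun y => sklarQuantile (F i) (y i)) := by
      rw [Measure.map_map (measurable_pi_apply i) hfm]
      rfl
    have hQm : Measurable fun y : Fin d → ℝ => sklarQuantile (F i) (y i) :=
      (sklar_quantile_measurable (hF i)).comp (measurable_pi_apply i)
    rw [hcomp, Measure.map_apply hQm measurableSet_Iic]
    have h1 : μ ((fun y : Fin d → ℝ => sklarQuantile (F i) (y i)) ⁻¹' Iic t) =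
        μ ((fun y : Fin d → ℝ => y i) ⁻¹' Iic (F i t)) := by
      apply measure_congr
      rw [Filter.eventuallyEq_set]
      filter_upwards [hA] with y hy
      simpa using sklar_quantile_le_iff (hF i) (hy i) t
    rw [h1, ← Measure.map_apply (measurable_pi_apply i) measurableSet_Iic, hmarg i,
      Measure.restrict_apply measurableSet_Iic]
    have hmem := sklar_cdf_mem (hF i) t
    have h2 : Iic (F i t) ∩ Icc (0 : ℝ) 1 = Icc 0 (F i t) := by
      ext x
      simp only [mem_inter_iff, mem_Iic, mem_Icc]
      constructor
      · rintro ⟨hx1, hx2, _⟩; exact ⟨hx2, hx1⟩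
      · rintro ⟨hx1, hx2⟩; exact ⟨hx2, hx1, hx2.trans hmem.2⟩
    rw [h2, Real.volume_Icc, ENNReal.toReal_ofReal (by linarith [hmem.1])]
    ring
end

section
/- Sklar's theorem (existence, continuous case): if X = (X₁,…,X_d) is a random vector whose marginal CDFs F₁,…,F_d are all continuous, then the joint CDF of (F₁(X₁),…,F_d(X_d)) is a copula C, and the joint CDF H of X satisfies H(x₁,…,x_d) = C(F₁(x₁),…,F_d(x_d)) for all x. -/
open MeasureTheory ProbabilityTheory Set Filter

/-! For a law `μ` on `ℝ` with continuous CDF `G`, the sublevel set `{G ≤ G x}` is a half-line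
`Iic s` with `G s = G x`, so it differs from `Iic x` by a `μ`-null set. With the intermediate
value theorem this makes `G` push `μ` forward to the uniform law on `[0,1]`. Applied to each
coordinate, the vector `(F i (X i))ᵢ` has uniform margins, and the events `{∀ i, X i ≤ x i}` and
`{∀ i, F i (X i) ≤ F i (x i)}` agree up to a null set. -/

theorem Monotone.exists_preimage_Iic_eq_Iic {α β : Type*} [ConditionallyCompleteLinearOrder α]
    [TopologicalSpace α] [OrderTopology α] [LinearOrder β] [TopologicalSpace β]
    [ClosedIicTopology β] {G : α → β} (hG : Monotone G) (hGc : Continuous G) {x b : α}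
    (hb : G x < G b) : ∃ s, G s = G x ∧ G ⁻¹' Iic (G x) = Iic s := by
  set S := G ⁻¹' Iic (G x)
  have hclosed : IsClosed S := isClosed_Iic.preimage hGc
  have hx : x ∈ S := le_rfl
  have hbdd : BddAbove S :=
    ⟨b, fun s hs => le_of_not_gt fun hbs => (hb.trans_le (hG hbs.le)).not_ge hs⟩
  refine ⟨sSup S, le_antisymm (hclosed.csSup_mem ⟨x, hx⟩ hbdd) (hG (le_csSup hbdd hx)), ?_⟩
  rw [← lowerClosure_eq_Iic_csSup ⟨x, hx⟩ hbdd hclosed]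
  exact ((isLowerSet_Iic _).preimage hG).lowerClosure.symm

namespace ProbabilityTheory

theorem cdf_map_apply {Ω : Type*} [MeasurableSpace Ω] {P : Measure Ω} [IsProbabilityMeasure P]
    {Z : Ω → ℝ} (hZ : Measurable Z) (x : ℝ) : cdf (P.map Z) x = (P {ω | Z ω ≤ x}).toReal := by
  have := Measure.isProbabilityMeasure_map (μ := P) hZ.aemeasurable
  rw [cdf_eq_real, measureReal_def, Measure.map_apply hZ measurableSet_Iic]
  rfl

variable {μ : Measure ℝ} [IsProbabilityMeasure μ]

theorem Iic_ae_eq_cdf_preimage_Iic (hμ : Continuous (cdf μ)) (x : ℝ) :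
    Iic x =ᵐ[μ] cdf μ ⁻¹' Iic (cdf μ x) := by
  refine ae_eq_of_subset_of_measure_ge (fun y hy => monotone_cdf μ hy)
    ?_ measurableSet_Iic.nullMeasurableSet (measure_ne_top _ _)
  rcases (cdf_le_one μ x).lt_or_eq with hx | hx
  · obtain ⟨b, hb⟩ := ((tendsto_cdf_atTop μ).eventually (eventually_gt_nhds hx)).exists
    obtain ⟨s, hs, hS⟩ := (monotone_cdf μ).exists_preimage_Iic_eq_Iic hμ hb
    rw [hS, ← ofReal_cdf, ← ofReal_cdf, hs]
  · rw [← ofReal_cdf, hx, ENNReal.ofReal_one]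
    exact prob_le_one

theorem measure_cdf_preimage_Iic (hμ : Continuous (cdf μ)) {a : ℝ} (ha : a < 1) :
    μ (cdf μ ⁻¹' Iic a) = ENNReal.ofReal a := by
  by_cases hbelow : ∃ y, cdf μ y ≤ a
  · obtain ⟨x, rfl⟩ := mem_range_of_exists_le_of_exists_ge hμ hbelow
      ((tendsto_cdf_atTop μ).eventually (eventually_ge_nhds ha)).exists
    rw [← measure_congr (Iic_ae_eq_cdf_preimage_Iic hμ x), ofReal_cdf]
  · push Not at hbelow
    have ha0 : a ≤ 0 := le_of_not_gt fun ha0 =>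
      let ⟨y, hy⟩ := ((tendsto_cdf_atBot μ).eventually (eventually_lt_nhds ha0)).exists
      (hbelow y).not_gt hy
    rw [ENNReal.ofReal_of_nonpos ha0, ← measure_empty (μ := μ)]
    exact congrArg μ (eq_empty_of_forall_notMem fun y hy => (hbelow y).not_ge hy)

/-- Probability integral transform. -/
theorem map_cdf_eq_volume_restrict (hμ : Continuous (cdf μ)) :
    μ.map (cdf μ) = volume.restrict (Icc 0 1) := by
  have : IsProbabilityMeasure (volume.restrict (Icc (0 : ℝ) 1)) :=
    ⟨by simp [Real.volume_Icc]⟩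
  refine Measure.ext_of_Iic _ _ fun a => ?_
  rw [Measure.map_apply (monotone_cdf μ).measurable measurableSet_Iic,
    Measure.restrict_apply measurableSet_Iic]
  rcases lt_or_ge a 1 with ha | ha
  · rw [measure_cdf_preimage_Iic hμ ha, inter_comm, ← Ici_inter_Iic, inter_assoc, Iic_inter_Iic,
      min_eq_right ha.le, Ici_inter_Iic, Real.volume_Icc, sub_zero]
  · have : cdf μ ⁻¹' Iic a = univ := eq_univ_of_forall fun y => (cdf_le_one μ y).trans ha
    rw [this, inter_eq_right.mpr (Icc_subset_Iic_self.trans (Iic_subset_Iic.mpr ha)),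
      Real.volume_Icc, measure_univ, sub_zero, ENNReal.ofReal_one]

end ProbabilityTheory

/-- Sklar's theorem (existence, continuous case): if all marginal CDFs of a
random vector `X` are continuous, then the joint CDF of `(F₁(X₁),…,F_d(X_d))`
is a copula `C`, and the joint CDF of `X` is `C ∘ (F₁,…,F_d)`. -/
theorem sklar_existence_continuous
    {Ω : Type*} [MeasureSpace Ω] [IsProbabilityMeasure (ℙ : Measure Ω)]
    (d : ℕ) (X : Ω → Fin d → ℝ) (hX : Measurable X)
    (F : Fin d → ℝ → ℝ)
    (hF : ∀ i x, F i x = (ℙ {ω | X ω i ≤ x}).toReal)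
    (hFc : ∀ i, Continuous (F i))
    (C : (Fin d → ℝ) → ℝ)
    (hC : ∀ u, C u = (ℙ {ω | ∀ i, F i (X ω i) ≤ u i}).toReal) :
    IsCopula d C ∧
      ∀ x : Fin d → ℝ, (ℙ {ω | ∀ i, X ω i ≤ x i}).toReal = C fun i => F i (x i) := by
  have hXi (i : Fin d) : Measurable fun ω => X ω i := (measurable_pi_apply i).comp hX
  have hlaw (i : Fin d) : IsProbabilityMeasure (Measure.map (fun ω => X ω i) ℙ) :=
    Measure.isProbabilityMeasure_map (hXi i).aemeasurable
  have hF_cdf (i : Fin d) : F i = cdf (Measure.map (fun ω => X ω i) ℙ) :=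
    funext fun x => (hF i x).trans (cdf_map_apply (hXi i) x).symm
  have hcdf_cont (i : Fin d) : Continuous (cdf (Measure.map (fun ω => X ω i) ℙ)) :=
    hF_cdf i ▸ hFc i
  have hU : Measurable fun ω i => F i (X ω i) :=
    measurable_pi_lambda _ fun i => (hFc i).measurable.comp (hXi i)
  refine ⟨⟨Measure.map (fun ω i => F i (X ω i)) ℙ, Measure.isProbabilityMeasure_map hU.aemeasurable,
    fun i => ?margin, fun u _ => ?cdf⟩, fun x => ?joint⟩
  case margin =>
    rw [Measure.map_map (measurable_pi_apply i) hU, ← map_cdf_eq_volume_restrict (hcdf_cont i),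
      Measure.map_map (monotone_cdf _).measurable (hXi i), ← hF_cdf i]
    rfl
  case cdf =>
    exact (hC u).trans (congrArg _ (Measure.map_apply hU (measurableSet_Iic (a := u))).symm)
  case joint =>
    have hlevel (i : Fin d) : {ω | X ω i ≤ x i} =ᵐ[ℙ] {ω | F i (X ω i) ≤ F i (x i)} := by
      rw [hF_cdf i]
      exact ((hXi i).quasiMeasurePreserving ℙ).preimage_ae_eq
        (Iic_ae_eq_cdf_preimage_Iic (hcdf_cont i) (x i))
    rw [hC, ofPred_forall, ofPred_forall,
      measure_congr (Filter.EventuallyEq.countable_iInter hlevel)]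
end

section
/- Uniqueness in Sklar's theorem: if all marginals F₁,…,F_d of a multivariate CDF H are continuous, then the copula C with H(x) = C(F₁(x₁),…,F_d(x_d)) is unique on [0,1]^d. -/
open MeasureTheory Set Filter

/-!
Two copulas of `H` agree at every point `(F₁(x₁), …, F_d(x_d))`. A copula is the joint CDF of
a measure with uniform margins, so it is Lipschitz, and when the `Fᵢ` are continuous these points
are dense in `[0,1]^d` by the intermediate value theorem.
-/

open ProbabilityTheory

variable {ι : Type*}

lemma Iic_subset_Iic_union_iUnion_preimage_Ioc {α : ι → Type*} [∀ i, LinearOrder (α i)]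
    (u v : ∀ i, α i) :
    Iic u ⊆ Iic v ∪ ⋃ i, Function.eval i ⁻¹' Ioc (v i) (u i) := by
  intro y hy
  by_cases hyv : y ≤ v
  · exact Or.inl hyv
  · obtain ⟨i, hi⟩ : ∃ i, ¬y i ≤ v i := by simpa [Pi.le_def] using hyv
    exact Or.inr (mem_iUnion.2 ⟨i, lt_of_not_ge hi, hy i⟩)

noncomputable def jointCDF (ν : Measure (ι → ℝ)) (u : ι → ℝ) : ℝ :=
  (ν (Iic u)).toReal

variable [Fintype ι]

lemma measure_Iic_le_measure_Iic_add_sum_dist {ν : Measure (ι → ℝ)}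
    (hν : ∀ i, ν.map (Function.eval i) ≤ volume) (u v : ι → ℝ) :
    ν (Iic u) ≤ ν (Iic v) + ENNReal.ofReal (∑ i, dist (u i) (v i)) := by
  have hslab (i : ι) :
      ν (Function.eval i ⁻¹' Ioc (v i) (u i)) ≤ ENNReal.ofReal (dist (u i) (v i)) := by
    calc ν (Function.eval i ⁻¹' Ioc (v i) (u i))
        = ν.map (Function.eval i) (Ioc (v i) (u i)) :=
          (Measure.map_apply (measurable_pi_apply i) measurableSet_Ioc).symm
      _ ≤ volume (Ioc (v i) (u i)) := hν i _
      _ ≤ ENNReal.ofReal (dist (u i) (v i)) := by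
          rw [Real.volume_Ioc, Real.dist_eq]
          exact ENNReal.ofReal_le_ofReal (le_abs_self _)
  calc ν (Iic u) ≤ ν (Iic v ∪ ⋃ i, Function.eval i ⁻¹' Ioc (v i) (u i)) :=
        measure_mono (Iic_subset_Iic_union_iUnion_preimage_Ioc u v)
    _ ≤ ν (Iic v) + ∑ i, ν (Function.eval i ⁻¹' Ioc (v i) (u i)) :=
        (measure_union_le _ _).trans (add_le_add_right (measure_iUnion_fintype_le _ _) _)
    _ ≤ ν (Iic v) + ENNReal.ofReal (∑ i, dist (u i) (v i)) := by
        rw [ENNReal.ofReal_sum_of_nonneg fun i _ => dist_nonneg]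
        gcongr with i
        exact hslab i

lemma lipschitzWith_jointCDF {ν : Measure (ι → ℝ)} [IsFiniteMeasure ν]
    (hν : ∀ i, ν.map (Function.eval i) ≤ volume) :
    LipschitzWith (Fintype.card ι) (jointCDF ν) := by
  refine LipschitzWith.of_le_add_mul _ fun u v => ?_
  have hsum : ∑ i, dist (u i) (v i) ≤ Fintype.card ι * dist u v := by
    simpa using Finset.sum_le_sum fun i (_ : i ∈ Finset.univ) => dist_le_pi_dist u v i
  calc jointCDF ν u
      ≤ jointCDF ν v + ∑ i, dist (u i) (v i) := by
        have := ENNReal.toReal_mono (by finiteness)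
          (measure_Iic_le_measure_Iic_add_sum_dist hν u v)
        rwa [ENNReal.toReal_add (measure_ne_top _ _) ENNReal.ofReal_ne_top,
          ENNReal.toReal_ofReal (Finset.sum_nonneg fun i _ => dist_nonneg)] at this
    _ ≤ jointCDF ν v + Fintype.card ι * dist u v := by gcongr
    _ = jointCDF ν v + ((Fintype.card ι : NNReal) : ℝ) * dist u v := by norm_cast

lemma Icc_subset_closure_range_cdf {ρ : Measure ℝ} (hρ : Continuous (cdf ρ)) :
    Icc 0 1 ⊆ closure (range (cdf ρ)) := by
  rw [← closure_Ioo zero_ne_one]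
  refine closure_mono fun c hc => mem_range_of_exists_le_of_exists_ge hρ ?_ ?_
  · exact ((tendsto_cdf_atBot ρ).eventually (eventually_le_nhds hc.1)).exists
  · exact ((tendsto_cdf_atTop ρ).eventually (eventually_ge_nhds hc.2)).exists

theorem sklar_uniqueness_general
    (d : ℕ) (μ : Measure (Fin d → ℝ)) [IsProbabilityMeasure μ]
    (H : (Fin d → ℝ) → ℝ)
    (F : Fin d → ℝ → ℝ)
    (hF : ∀ i t, F i t = ((μ.map fun y => y i) (Iic t)).toReal)
    (hFc : ∀ i, Continuous (F i))
    (C C' : (Fin d → ℝ) → ℝ) (hC : IsCopula d C) (hC' : IsCopula d C')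
    (hSk : ∀ x, H x = C fun i => F i (x i))
    (hSk' : ∀ x, H x = C' fun i => F i (x i)) :
    ∀ u : Fin d → ℝ, (∀ i, u i ∈ Icc (0 : ℝ) 1) → C u = C' u := by
  obtain ⟨ν, _, hν, hCν⟩ := hC
  obtain ⟨ν', _, hν', hCν'⟩ := hC'
  have hFcdf (i : Fin d) : F i = cdf (μ.map fun y => y i) := by
    have := Measure.isProbabilityMeasure_map (μ := μ) (measurable_pi_apply i).aemeasurable
    ext t
    rw [hF, cdf_eq_real, measureReal_def]
  have hF01 (x : Fin d → ℝ) (i : Fin d) : F i (x i) ∈ Icc (0 : ℝ) 1 :=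
    hFcdf i ▸ ⟨cdf_nonneg _ _, cdf_le_one _ _⟩
  have hagree : EqOn (jointCDF ν) (jointCDF ν') (range (Pi.map F)) := by
    rintro _ ⟨x, rfl⟩
    calc jointCDF ν (Pi.map F x) = C (Pi.map F x) := (hCν _ (hF01 x)).symm
      _ = H x := (hSk x).symm
      _ = C' (Pi.map F x) := hSk' x
      _ = jointCDF ν' (Pi.map F x) := hCν' _ (hF01 x)
  have hdense : pi univ (fun _ => Icc 0 1) ⊆ closure (range (Pi.map F)) := by
    rw [range_piMap, closure_pi_set]
    exact pi_mono fun i _ => hFcdf i ▸ Icc_subset_closure_range_cdf (hFcdf i ▸ hFc i)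
  intro u hu
  rw [hCν u hu, hCν' u hu]
  have hνLip := lipschitzWith_jointCDF fun i => (hν i).trans_le Measure.restrict_le_self
  have hν'Lip := lipschitzWith_jointCDF fun i => (hν' i).trans_le Measure.restrict_le_self
  exact hagree.closure hνLip.continuous hν'Lip.continuous (hdense fun i _ => hu i)

/-- Uniqueness in Sklar's theorem: if all margins of a multivariate CDF `H`
are continuous, then any two copulas giving the Sklar decomposition of `H`
agree on `[0,1]^d`. -/
theorem sklar_uniqueness
    (d : ℕ) (μ : Measure (Fin d → ℝ)) [IsProbabilityMeasure μ]
    (H : (Fin d → ℝ) → ℝ)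
    (hH : ∀ x, H x = (μ {y | ∀ i, y i ≤ x i}).toReal)
    (F : Fin d → ℝ → ℝ)
    (hF : ∀ i t, F i t = ((μ.map fun y => y i) (Iic t)).toReal)
    (hFc : ∀ i, Continuous (F i))
    (C C' : (Fin d → ℝ) → ℝ) (hC : IsCopula d C) (hC' : IsCopula d C')
    (hSk : ∀ x, H x = C fun i => F i (x i))
    (hSk' : ∀ x, H x = C' fun i => F i (x i)) :
    ∀ u : Fin d → ℝ, (∀ i, u i ∈ Icc (0 : ℝ) 1) → C u = C' u :=
  sklar_uniqueness_general d μ H F hF hFc C C' hC hC' hSk hSk'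
end
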